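/- Let N ≥ 1 and m : Fin N → ℕ, and for k ∈ ℕ let f(k) be the number of functions a : Fin N → ℕ with a i ≤ m i for all i and ∑ᵢ a i = k. Then f is log-concave: f(k)² ≥ f(k−1) · f(k+1) for every k ≥ 1; equivalently, k ↦ ln f(k) is concave where f is nonzero. -/

import Mathlib

/-!
Adding a coordinate with range `{0, …, M}` replaces the counting sequence `f` by its window sums
`x ↦ f x + f (x - 1) + ⋯ + f (x - M)`, and the count for zero coordinates is the point mass at
`0`. A log-concave sequence `f` without internal zeros satisfies
`f (a + 1) * f (b - 1) ≤ f a * f b` whenever `b ≤ a`, and this is exactly what is needed to see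
that its window sums are again log-concave without internal zeros.
-/

open Finset Function

def LogConcave (f : ℤ → ℕ) : Prop :=
  ∀ x, f (x - 1) * f (x + 1) ≤ f x ^ 2

theorem LogConcave.apply_add_one_mul_apply_sub_one_le {f : ℤ → ℕ} (hf : LogConcave f)
    (hs : (support f).OrdConnected) {a b : ℤ} (hba : b ≤ a) :
    f (a + 1) * f (b - 1) ≤ f a * f b := by
  induction a, hba using Int.leInduction with
  | base => simpa [sq, mul_comm] using hf b
  | succ c hbc ih =>
    by_cases hc₂ : f (c + 1 + 1) = 0
    · simp [hc₂]
    by_cases hb : f (b - 1) = 0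
    · simp [hb]
    have hc₁ : 0 < f (c + 1) := Nat.pos_of_ne_zero <| hs.out hb hc₂ ⟨by omega, by omega⟩
    have hlc : f c * f (c + 1 + 1) ≤ f (c + 1) ^ 2 := by simpa using hf (c + 1)
    refine Nat.le_of_mul_le_mul_right ?_ hc₁
    calc f (c + 1 + 1) * f (b - 1) * f (c + 1)
        = f (c + 1 + 1) * (f (c + 1) * f (b - 1)) := by ring
      _ ≤ f (c + 1 + 1) * (f c * f b) := Nat.mul_le_mul_left _ ih
      _ = f c * f (c + 1 + 1) * f b := by ring
      _ ≤ f (c + 1) ^ 2 * f b := Nat.mul_le_mul_right _ hlc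
      _ = f (c + 1) * f b * f (c + 1) := by ring

def windowSum (f : ℤ → ℕ) (n : ℕ) (x : ℤ) : ℕ :=
  ∑ j ∈ range n, f (x - j)

section windowSum

variable {f : ℤ → ℕ} {n : ℕ}

theorem windowSum_succ (x : ℤ) : windowSum f (n + 1) x = windowSum f n x + f (x - n) :=
  sum_range_succ _ _

theorem windowSum_succ' (x : ℤ) : windowSum f (n + 1) x = f x + windowSum f n (x - 1) := by
  simp only [windowSum, sum_range_succ', add_comm (f x)]
  congr 1
  · exact sum_congr rfl fun j _ => by push_cast; ring_nf
  · simp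

theorem mem_support_windowSum {x : ℤ} :
    x ∈ support (windowSum f n) ↔ ∃ y ∈ support f, x - n < y ∧ y ≤ x := by
  simp only [mem_support, windowSum, ne_eq, sum_eq_zero_iff, not_forall, mem_range]
  constructor
  · rintro ⟨j, hj, hfj⟩
    exact ⟨x - j, hfj, by omega, by omega⟩
  · rintro ⟨y, hy, hny, hyx⟩
    exact ⟨(x - y).toNat, by omega, by rwa [Int.toNat_of_nonneg (by omega), sub_sub_cancel]⟩

theorem ordConnected_support_windowSum (hs : (support f).OrdConnected) :
    (support (windowSum f n)).OrdConnected := by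
  refine ⟨fun a ha c hc b ⟨hab, hbc⟩ => ?_⟩
  obtain ⟨p, hp, hap, hpa⟩ := mem_support_windowSum.1 ha
  obtain ⟨q, hq, hcq, hqc⟩ := mem_support_windowSum.1 hc
  rw [mem_support_windowSum]
  by_cases hbp : b - n < p
  · exact ⟨p, hp, hbp, hpa.trans hab⟩
  by_cases hqb : q ≤ b
  · exact ⟨q, hq, by omega, hqb⟩
  exact ⟨b, hs.out hp hq ⟨by omega, by omega⟩, by omega, le_rfl⟩

/-- Writing `S = windowSum f n x` and `T = windowSum f n (x - 1)`, the four values of the longer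
window around `x` are `S + f (x - n) = f x + T`, `f (x + 1) + S` and `T + f (x - 1 - n)`; after
expanding, each of the three cross terms is dominated by
`LogConcave.apply_add_one_mul_apply_sub_one_le`. -/
theorem LogConcave.windowSum (hf : LogConcave f) (hs : (support f).OrdConnected) :
    LogConcave (windowSum f n) := by
  cases n with
  | zero => simp [LogConcave, windowSum]
  | succ n =>
    intro x
    set S := windowSum f n x
    set T := windowSum f n (x - 1)
    have h₁ : T * f (x + 1) ≤ f x * S := by
      simp only [T, S, windowSum, sum_mul, mul_sum]
      refine sum_le_sum fun j _ => ?_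
      have := hf.apply_add_one_mul_apply_sub_one_le hs (a := x) (b := x - j) (by omega)
      ring_nf at this ⊢
      exact this
    have h₂ : f (x - 1 - n) * S ≤ T * f (x - n) := by
      simp only [T, S, windowSum, sum_mul, mul_sum]
      refine sum_le_sum fun j hj => ?_
      have := hf.apply_add_one_mul_apply_sub_one_le hs (a := x - 1 - j) (b := x - n)
        (by rw [mem_range] at hj; omega)
      ring_nf at this ⊢
      exact this
    have h₃ : f (x - 1 - n) * f (x + 1) ≤ f x * f (x - n) := by
      have := hf.apply_add_one_mul_apply_sub_one_le hs (a := x) (b := x - n) (by omega)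
      ring_nf at this ⊢
      exact this
    calc windowSum f (n + 1) (x - 1) * windowSum f (n + 1) (x + 1)
        = (T + f (x - 1 - n)) * (f (x + 1) + S) := by
          rw [windowSum_succ, windowSum_succ', add_sub_cancel_right]
      _ ≤ (f x + T) * (S + f (x - n)) := by nlinarith
      _ = windowSum f (n + 1) x ^ 2 := by
          rw [sq]; nth_rw 1 [windowSum_succ']; rw [windowSum_succ]

end windowSum

/-- Indexed by `ℤ` so that window sums need no truncated subtraction. -/
noncomputable def boxCount {n : ℕ} (m : Fin n → ℕ) (x : ℤ) : ℕ :=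
  Nat.card {a : Fin n → ℕ // (∀ i, a i ≤ m i) ∧ ((∑ i, a i : ℕ) : ℤ) = x}

theorem boxCount_zero (m : Fin 0 → ℕ) (x : ℤ) : boxCount m x = if x = 0 then 1 else 0 := by
  split_ifs with hx <;> simp [boxCount, hx, eq_comm]

instance {n : ℕ} (m : Fin n → ℕ) (P : (Fin n → ℕ) → Prop) :
    Finite {a : Fin n → ℕ // (∀ i, a i ≤ m i) ∧ P a} :=
  ((Set.finite_Iic m).subset fun _ ha => ha.1).to_subtype

def boxEquivSigma {n : ℕ} (m : Fin (n + 1) → ℕ) (x : ℤ) :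
    {a : Fin (n + 1) → ℕ // (∀ i, a i ≤ m i) ∧ ((∑ i, a i : ℕ) : ℤ) = x} ≃
      Σ j : Fin (m 0 + 1),
        {b : Fin n → ℕ // (∀ i, b i ≤ Fin.tail m i) ∧ ((∑ i, b i : ℕ) : ℤ) = x - j} where
  toFun a := ⟨⟨a.1 0, Nat.lt_succ_of_le (a.2.1 0)⟩, Fin.tail a.1, fun i => a.2.1 i.succ, by
    have := a.2.2; push_cast [Fin.sum_univ_succ] at this ⊢; simp only [Fin.tail]; omega⟩
  invFun p := ⟨Fin.cons p.1 p.2.1, Fin.cases (Nat.le_of_lt_succ p.1.2) p.2.2.1, by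
    have := p.2.2.2; push_cast [Fin.sum_cons] at this ⊢; omega⟩
  left_inv a := Subtype.ext (Fin.cons_self_tail a.1)
  right_inv p := Sigma.subtype_ext (Fin.ext (Fin.cons_zero (α := fun _ => ℕ) (p.1 : ℕ) p.2.1))
    (Fin.tail_cons (α := fun _ => ℕ) (p.1 : ℕ) p.2.1)

theorem boxCount_succ {n : ℕ} (m : Fin (n + 1) → ℕ) :
    boxCount m = windowSum (boxCount (Fin.tail m)) (m 0 + 1) := by
  ext x
  rw [boxCount, Nat.card_congr (boxEquivSigma m x), Nat.card_sigma, windowSum,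
    ← Fin.sum_univ_eq_sum_range]
  rfl

theorem logConcave_boxCount {n : ℕ} (m : Fin n → ℕ) :
    LogConcave (boxCount m) ∧ (support (boxCount m)).OrdConnected := by
  induction n with
  | zero =>
    have hsupp : support (boxCount m) = {0} := by ext x; simp [boxCount_zero m x]
    refine ⟨fun x => ?_, hsupp ▸ Set.ordConnected_singleton⟩
    simp only [boxCount_zero]
    split_ifs <;> omega
  | succ n ih =>
    obtain ⟨hlc, hs⟩ := ih (Fin.tail m)
    rw [boxCount_succ]
    exact ⟨hlc.windowSum hs, ordConnected_support_windowSum hs⟩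

theorem boxCount_natCast {n : ℕ} (m : Fin n → ℕ) (k : ℕ) :
    boxCount m k = Nat.card {a : Fin n → ℕ // (∀ i, a i ≤ m i) ∧ ∑ i, a i = k} := by
  simp only [boxCount, Nat.cast_inj]

theorem box_counting_log_concave_general (N : ℕ) (m : Fin N → ℕ)
    (k : ℕ) (hk : 1 ≤ k) :
    Nat.card {a : Fin N → ℕ // (∀ i, a i ≤ m i) ∧ ∑ i, a i = k - 1} *
        Nat.card {a : Fin N → ℕ // (∀ i, a i ≤ m i) ∧ ∑ i, a i = k + 1} ≤
      Nat.card {a : Fin N → ℕ // (∀ i, a i ≤ m i) ∧ ∑ i, a i = k} ^ 2 := by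
  simp only [← boxCount_natCast, Nat.cast_sub hk, Nat.cast_add, Nat.cast_one]
  exact (logConcave_boxCount m).1 k

/-- Log-concavity of the number of lattice points of the box `∏ i, {0, …, m i}` with
coordinate sum `k`. -/
theorem box_counting_log_concave (N : ℕ) (hN : 1 ≤ N) (m : Fin N → ℕ)
    (k : ℕ) (hk : 1 ≤ k) :
    Nat.card {a : Fin N → ℕ // (∀ i, a i ≤ m i) ∧ ∑ i, a i = k - 1} *
        Nat.card {a : Fin N → ℕ // (∀ i, a i ≤ m i) ∧ ∑ i, a i = k + 1} ≤
      Nat.card {a : Fin N → ℕ // (∀ i, a i ≤ m i) ∧ ∑ i, a i = k} ^ 2 :=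
  box_counting_log_concave_general N m k hk
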